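/- arXiv:1512.07026 — 4 statements merged into one kernel-verified Lean document; each statement's English description precedes it below -/
import Mathlib

section
/- For every b ≥ 1, h_b = ∑_{k=1}^b (−1)^{k+b} ∑_{(α₁,…,α_k) ∈ (ℕ⁺)^k, α₁+⋯+α_k = b} σ_{α₁}⋯σ_{α_k}, expressing complete homogeneous symmetric polynomials in terms of elementary symmetric polynomials. -/
open Finset

variable {R : Type*} [CommRing R]

/-- The elementary symmetric polynomial `σ_b` evaluated at `x`. -/
def esymmVal {n : ℕ} (x : Fin n → R) (b : ℕ) : R :=
  ∑ s ∈ Finset.powersetCard b (Finset.univ : Finset (Fin n)), ∏ i ∈ s, x i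

/-- The complete homogeneous symmetric polynomial `h_b` evaluated at `x`. -/
def hsymmVal {n : ℕ} (x : Fin n → R) (b : ℕ) : R :=
  ∑ d ∈ Finset.Nat.antidiagonalTuple n b, ∏ i : Fin n, x i ^ d i

/-!
In `R⟦t⟧` the series `E(t) = ∏ᵢ (1 - xᵢ t) = ∑ⱼ (-1)ʲ σⱼ tʲ` and `H(t) = ∏ᵢ ∑ₖ xᵢᵏ tᵏ = ∑_b h_b tᵇ`
are inverse to each other. Writing `E = 1 - F` with `F(0) = 0`, we get `H = ∑ₖ Fᵏ`, where only
`k ≤ b` contributes to the coefficient of `tᵇ`; that coefficient of `Fᵏ` is the sum over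
compositions `α` of `b` into `k` positive parts of `∏ᵢ (-1)^(αᵢ + 1) σ_{αᵢ} = (-1)^(k + b) σ_α`.
-/

open PowerSeries

namespace PowerSeries

theorem coeff_prod_fin {S : Type*} [CommSemiring S] {n : ℕ} (f : Fin n → S⟦X⟧) (d : ℕ) :
    coeff d (∏ i, f i) = ∑ l ∈ Finset.Nat.antidiagonalTuple n d, ∏ i, coeff (l i) (f i) := by
  rw [coeff_prod, finsuppAntidiag, sum_map, ← piAntidiag_univ_fin_eq_antidiagonalTuple]
  exact sum_attach (univ.piAntidiag d) fun l => ∏ i, coeff (l i) (f i)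

theorem coeff_pow_of_constantCoeff_eq_zero {S : Type*} [CommSemiring S] {F : S⟦X⟧}
    (hF : constantCoeff F = 0) (k d : ℕ) :
    coeff d (F ^ k) = ∑ α ∈ (Finset.Nat.antidiagonalTuple k d).filter (fun α => ∀ i, 0 < α i),
      ∏ i, coeff (α i) F := by
  rw [← Fin.prod_const, coeff_prod_fin]
  refine (sum_filter_of_ne fun α _ hα i => Nat.pos_of_ne_zero fun h => hα ?_).symm
  exact prod_eq_zero (mem_univ i) (by rw [h, coeff_zero_eq_constantCoeff_apply, hF])

theorem coeff_eq_sum_coeff_pow_of_mul_one_sub_eq_one {H F : R⟦X⟧} (hF : constantCoeff F = 0)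
    (hHF : H * (1 - F) = 1) (d : ℕ) :
    coeff d H = ∑ k ∈ range (d + 1), coeff d (F ^ k) := by
  obtain ⟨G, hG⟩ : X ^ (d + 1) ∣ H * F ^ (d + 1) :=
    (pow_dvd_pow_of_dvd (X_dvd_iff.2 hF) _).mul_left H
  have hsplit : H = ∑ k ∈ range (d + 1), F ^ k + X ^ (d + 1) * G := by
    rw [← hG, ← one_mul (∑ k ∈ range (d + 1), F ^ k), ← hHF, mul_assoc, mul_neg_geom_sum]
    ring
  rw [hsplit, map_add, map_sum, coeff_X_pow_mul', if_neg (by omega), add_zero]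

theorem one_sub_C_mul_X_mul_mk_pow (a : R) : (1 - C a * X) * mk (a ^ ·) = 1 := by
  simpa [rescale_mk, mul_comm] using congrArg (rescale a) (mk_one_mul_one_sub_eq_one R)

end PowerSeries

theorem coeff_prod_one_sub_C_mul_X {n : ℕ} (x : Fin n → R) (j : ℕ) :
    coeff j (∏ i, (1 - C (x i) * X)) = (-1) ^ j * esymmVal x j := by
  have hterm (t : Finset (Fin n)) :
      ∏ i ∈ t, -(C (x i) * X) = C ((-1) ^ #t * ∏ i ∈ t, x i) * X ^ #t := by
    simp [prod_neg, prod_mul_distrib, map_prod, mul_assoc]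
  simp_rw [sub_eq_add_neg, prod_one_add, hterm, map_sum, coeff_C_mul_X_pow]
  rw [← sum_filter, esymmVal, mul_sum, powersetCard_eq_filter]
  refine sum_congr (filter_congr fun t _ => eq_comm) fun t ht => ?_
  rw [(mem_filter.1 ht).2]

theorem constantCoeff_one_sub_prod_one_sub_C_mul_X {n : ℕ} (x : Fin n → R) :
    constantCoeff (1 - ∏ i, (1 - C (x i) * X)) = 0 := by
  rw [← coeff_zero_eq_constantCoeff_apply, map_sub, coeff_prod_one_sub_C_mul_X]
  simp [esymmVal]

theorem coeff_pow_one_sub_prod_one_sub_C_mul_X {n : ℕ} (x : Fin n → R) (k d : ℕ) :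
    coeff d ((1 - ∏ i, (1 - C (x i) * X)) ^ k) = (-1) ^ (k + d) *
      ∑ α ∈ (Finset.Nat.antidiagonalTuple k d).filter (fun α => ∀ i, 0 < α i),
        ∏ i, esymmVal x (α i) := by
  rw [coeff_pow_of_constantCoeff_eq_zero (constantCoeff_one_sub_prod_one_sub_C_mul_X x), mul_sum]
  refine sum_congr rfl fun α hα => ?_
  obtain ⟨hsum, hpos⟩ := mem_filter.1 hα
  have hcoeff (i : Fin k) : coeff (α i) (1 - ∏ i, (1 - C (x i) * X)) =
      (-1) ^ (α i + 1) * esymmVal x (α i) := by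
    rw [map_sub, coeff_one, if_neg (hpos i).ne', coeff_prod_one_sub_C_mul_X]
    ring
  rw [prod_congr rfl fun i _ => hcoeff i, prod_mul_distrib, prod_pow_eq_pow_sum, sum_add_distrib,
    Finset.Nat.mem_antidiagonalTuple.1 hsum]
  simp [add_comm]

theorem coeff_prod_mk_pow {n : ℕ} (x : Fin n → R) (b : ℕ) :
    coeff b (∏ i, mk (x i ^ ·)) = hsymmVal x b := by
  simp [coeff_prod_fin, hsymmVal]

/-- `h_b = ∑_{k=1}^b (−1)^{k+b} ∑_{α₁+⋯+α_k = b, αᵢ ≥ 1} σ_{α₁}⋯σ_{α_k}`. -/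
theorem hsymm_eq_alternating_sum_esymm {n : ℕ} (x : Fin n → R) (b : ℕ) (hb : 1 ≤ b) :
    hsymmVal x b =
      ∑ k ∈ Finset.Icc 1 b, (-1 : R) ^ (k + b) *
        ∑ α ∈ (Finset.Nat.antidiagonalTuple k b).filter (fun α => ∀ i, 0 < α i),
          ∏ i : Fin k, esymmVal x (α i) := by
  have hinv : (∏ i, mk (x i ^ ·)) * (1 - (1 - ∏ i, (1 - C (x i) * X))) = 1 := by
    rw [sub_sub_cancel, ← prod_mul_distrib]
    exact prod_eq_one fun i _ => by rw [mul_comm, one_sub_C_mul_X_mul_mk_pow]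
  rw [← coeff_prod_mk_pow,
    coeff_eq_sum_coeff_pow_of_mul_one_sub_eq_one (constantCoeff_one_sub_prod_one_sub_C_mul_X x) hinv,
    range_eq_Ico, sum_eq_sum_Ico_succ_bot (by omega), pow_zero, coeff_one, if_neg (by omega),
    zero_add, Ico_add_one_right_eq_Icc]
  exact sum_congr rfl fun k _ => coeff_pow_one_sub_prod_one_sub_C_mul_X x k b
end

section
/- For 0 ≤ b ≤ n−1, the elementary symmetric polynomial σ_b evaluated at the Jucys–Murphy elements equals the sum of all permutations of Sₙ having exactly n − b cycles: σ_b(𝒥₂,…,𝒥ₙ) = ∑_{g ∈ Sₙ, ℓ(g) = n−b} g in ℚ[Sₙ], where ℓ(g) is the number of cycles (including fixed points) of g. -/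
/-!
Both sides satisfy the same recursion in the number of points. Splitting off the last element of
the commuting family gives `σ_{b+1}(𝒥₂,…,𝒥_{m+1}) = σ_{b+1}(𝒥₂,…,𝒥_m) + 𝒥_{m+1} σ_b(𝒥₂,…,𝒥_m)`
inside `ℚ[S_m] ⊆ ℚ[S_{m+1}]`. Every `g ∈ S_{m+1}` is uniquely `h` or `(i m+1) h` with `h ∈ S_m`
and `i ≤ m`: in the first case `g` has one more cycle than `h` (the fixed point `m+1`), in the
second `m+1` is inserted into the cycle of `i` and the number of cycles is unchanged. As
`𝒥_{m+1} = ∑_{i ≤ m} (i m+1)`, the sum of the permutations in `S_{m+1}` with `k+1` cycles is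
therefore the sum of those in `S_m` with `k` cycles plus `𝒥_{m+1}` times the sum of those in `S_m`
with `k+1` cycles.
-/

open Finset

/-- The Jucys–Murphy element `𝒥_k` in `ℚ[S_{n+1}]`. -/
noncomputable def JM (n : ℕ) (k : Fin (n + 1)) : MonoidAlgebra ℚ (Equiv.Perm (Fin (n + 1))) :=
  ∑ i ∈ Finset.univ.filter (fun i : Fin (n + 1) => i < k),
    MonoidAlgebra.of ℚ (Equiv.Perm (Fin (n + 1))) (Equiv.swap i k)

/-- The total number of cycles of a permutation of `{1,…,n+1}`, counting fixed points. -/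
def numCycles (n : ℕ) (g : Equiv.Perm (Fin (n + 1))) : ℕ :=
  g.cycleType.card + ((n + 1) - g.cycleType.sum)

open Equiv Equiv.Perm

theorem Finset.noncommProd_map {ι κ M : Type*} [Monoid M] {f : ι → M}
    (hf : Pairwise fun i j => Commute (f i) (f j)) (s : Finset κ) (e : κ ↪ ι) :
    (s.map e).noncommProd f (hf.set_pairwise _) =
      s.noncommProd (f ∘ e) ((hf.comp_of_injective e.injective).set_pairwise _) := by
  simp only [noncommProd, map_val, Multiset.map_map]

section NoncommEsymm

variable {ι R : Type*} [Semiring R]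

def noncommEsymm [Fintype ι] (f : ι → R) (hf : Pairwise fun i j => Commute (f i) (f j))
    (k : ℕ) : R :=
  ∑ s ∈ powersetCard k univ, s.noncommProd f (hf.set_pairwise _)

variable [Fintype ι] {f : ι → R} {hf : Pairwise fun i j => Commute (f i) (f j)}

theorem noncommEsymm_zero : noncommEsymm f hf 0 = 1 := by
  simp [noncommEsymm]

theorem noncommEsymm_eq_zero_of_card_lt {k : ℕ} (hk : Fintype.card ι < k) :
    noncommEsymm f hf k = 0 := by
  rw [noncommEsymm, powersetCard_eq_empty.2 (by rwa [card_univ]), sum_empty]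

theorem map_noncommEsymm {S : Type*} [Semiring S] (φ : R →+* S) (k : ℕ) :
    φ (noncommEsymm f hf k) = noncommEsymm (φ ∘ f) (fun _ _ hij => (hf hij).map φ) k := by
  simp only [noncommEsymm, map_sum, Finset.map_noncommProd]
  rfl

end NoncommEsymm

theorem noncommEsymm_fin_succ {R : Type*} [Semiring R] {n : ℕ} {f : Fin (n + 1) → R}
    (hf : Pairwise fun i j => Commute (f i) (f j)) (k : ℕ) :
    noncommEsymm f hf (k + 1) =
      noncommEsymm (f ∘ Fin.castSucc) (hf.comp_of_injective (Fin.castSucc_injective _)) (k + 1) +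
        f (Fin.last n) *
          noncommEsymm (f ∘ Fin.castSucc) (hf.comp_of_injective (Fin.castSucc_injective _)) k := by
  have hlast : Fin.last n ∉ univ.map Fin.castSuccEmb := by simp
  simp only [noncommEsymm]
  rw [Fin.univ_castSuccEmb, cons_eq_insert, powersetCard_succ_insert hlast, sum_union, sum_image,
    mul_sum, powersetCard_map, sum_map, powersetCard_map, sum_map]
  · congr 1
    · exact sum_congr rfl fun s _ => noncommProd_map hf s _
    refine sum_congr rfl fun s _ => ?_
    rw [noncommProd_insert_of_notMem _ _ _ _ (by simp)]
    exact congrArg _ (noncommProd_map hf s _)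
  · intro s hs t ht hst
    rw [← erase_insert fun h => hlast ((mem_powersetCard.1 hs).1 h), hst,
      erase_insert fun h => hlast ((mem_powersetCard.1 ht).1 h)]
  · exact disjoint_left.2 fun s hs hs' => by
      obtain ⟨t, -, rfl⟩ := mem_image.1 hs'
      exact hlast ((mem_powersetCard.1 hs).1 (mem_insert_self _ _))

section CycleCount

variable {α : Type*} [Fintype α] [DecidableEq α]

theorem card_parts_partition (σ : Perm α) :
    Multiset.card σ.partition.parts =
      Multiset.card σ.cycleType + (Fintype.card α - σ.cycleType.sum) := by
  simp [parts_partition, sum_cycleType]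

/-- Write `σ = c * d` with `c` the cycle of `x`; multiplying by `swap x (c x)` splits off `x` as a
fixed point, leaving a cycle one shorter (or a second fixed point when `c` is a transposition). -/
theorem card_parts_partition_swap_mul_self {σ : Perm α} {x : α} (hx : σ x ≠ x) :
    Multiset.card (swap x (σ x) * σ).partition.parts = Multiset.card σ.partition.parts + 1 := by
  set c := σ.cycleOf x
  have hc : c.IsCycle := σ.isCycle_cycleOf hx
  have hcx : c x = σ x := σ.cycleOf_apply_self x
  set d := σ * c⁻¹
  have hdc : Disjoint d c := disjoint_mul_inv_of_mem_cycleFactorsFinset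
    (cycleOf_mem_cycleFactorsFinset_iff.2 (mem_support.2 hx))
  have hσ : σ = c * d := by rw [← hdc.commute.eq, inv_mul_cancel_right]
  have hdc' : Disjoint (swap x (c x) * c) d :=
    hdc.symm.mono (fun _ hy => (mem_support_swap_mul_imp_mem_support_ne hy).1) le_rfl
  have hsum := (c * d).sum_cycleType_le
  rw [hdc.symm.cycleType_mul, hc.cycleType] at hsum
  rw [← hcx, card_parts_partition, card_parts_partition, hσ, ← mul_assoc, hdc'.cycleType_mul,
    hdc.symm.cycleType_mul, hc.cycleType]
  rw [← hcx] at hx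
  by_cases hccx : c (c x) = x
  · have hc2 : c = swap x (c x) := hc.eq_swap_of_apply_apply_eq_self hx hccx
    have h1 : swap x (c x) * c = 1 := (congrArg (swap x (c x) * ·) hc2).trans (swap_mul_self _ _)
    have h2 : #c.support = 2 := by rw [hc2, card_support_swap hx.symm]
    simp only [h1, h2, cycleType_one, zero_add, Multiset.sum_add, Multiset.card_add,
      Multiset.sum_singleton, Multiset.card_singleton] at hsum ⊢
    omega
  · have h2 : #(swap x (c x) * c).support + 1 = #c.support := by
      rw [support_swap_mul_eq c x hccx, card_sdiff_of_subset (by simpa using hx), card_singleton,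
        Nat.sub_add_cancel (card_pos.2 ⟨x, mem_support.2 hx⟩)]
    simp only [(hc.swap_mul hx hccx).cycleType, Multiset.sum_add, Multiset.card_add,
      Multiset.sum_singleton, Multiset.card_singleton] at hsum ⊢
    omega

theorem card_parts_partition_swap_mul {σ : Perm α} {a b : α} (hab : a ≠ b) (hb : σ b = b) :
    Multiset.card (swap a b * σ).partition.parts + 1 = Multiset.card σ.partition.parts := by
  have hba : (swap a b * σ) b = a := by simp [hb]
  have := card_parts_partition_swap_mul_self (σ := swap a b * σ) (x := b) (by rwa [hba])
  rwa [hba, swap_comm, ← mul_assoc, swap_mul_self, one_mul, eq_comm] at this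

end CycleCount

noncomputable def permCastSucc (m : ℕ) : Perm (Fin m) →* Perm (Fin (m + 1)) :=
  extendDomainHom Fin.castSuccEmb.toEquivRange

section permCastSucc

variable {m : ℕ} (σ : Perm (Fin m))

@[simp]
theorem permCastSucc_apply_castSucc (i : Fin m) :
    permCastSucc m σ i.castSucc = (σ i).castSucc :=
  extendDomain_apply_image σ _ i

@[simp]
theorem permCastSucc_apply_last : permCastSucc m σ (Fin.last m) = Fin.last m :=
  extendDomain_apply_not_subtype σ _ (by simp)

theorem cycleType_permCastSucc : (permCastSucc m σ).cycleType = σ.cycleType :=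
  cycleType_extendDomain _

theorem permCastSucc_swap (i j : Fin m) :
    permCastSucc m (swap i j) = swap i.castSucc j.castSucc := by
  ext x
  induction x using Fin.lastCases with
  | last => simp [swap_apply_of_ne_of_ne (Fin.castSucc_lt_last i).ne' (Fin.castSucc_lt_last j).ne']
  | cast y => simp [(Fin.castSucc_injective m).swap_apply]

theorem permCastSucc_eq_permCongr :
    permCastSucc m σ = finSuccEquivLast.symm.permCongr σ.optionCongr := by
  ext x
  induction x using Fin.lastCases with
  | last => simp [permCongr_apply]
  | cast y => simp [permCongr_apply]

end permCastSucc

theorem Fintype.sum_perm_fin_succ {M : Type*} [AddCommMonoid M] (m : ℕ)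
    (F : Perm (Fin (m + 1)) → M) :
    ∑ g, F g = ∑ σ, F (permCastSucc m σ) +
      ∑ i : Fin m, ∑ σ, F (swap i.castSucc (Fin.last m) * permCastSucc m σ) := by
  rw [← (finSuccEquivLast.permCongr.trans decomposeOption).symm.sum_comp, Fintype.sum_prod_type,
    Fintype.sum_option]
  congr 1
  · refine Fintype.sum_congr _ _ fun σ => congrArg F ?_
    simp [permCastSucc_eq_permCongr, Perm.one_def]
  · refine Fintype.sum_congr _ _ fun i => Fintype.sum_congr _ _ fun σ => congrArg F ?_
    rw [symm_trans_apply, decomposeOption_symm_apply, permCongr_symm, ← permCongrHom_coe, map_mul,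
      permCongrHom_coe, permCastSucc_eq_permCongr]
    simp [permCongr_def, swap_comm]

section numCycles

variable {n : ℕ}

theorem numCycles_eq_card_parts (g : Perm (Fin (n + 1))) :
    numCycles n g = Multiset.card g.partition.parts := by
  rw [card_parts_partition, Fintype.card_fin, numCycles]

theorem numCycles_pos (g : Perm (Fin (n + 1))) : 0 < numCycles n g := by
  rw [numCycles_eq_card_parts, Multiset.card_pos]
  intro h
  simpa [h] using g.partition.parts_sum

theorem numCycles_eq_add_one_iff {g : Perm (Fin (n + 1))} : numCycles n g = n + 1 ↔ g = 1 := by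
  refine ⟨fun h => card_cycleType_eq_zero.1 ?_, by rintro rfl; simp [numCycles]⟩
  have hcard := Multiset.card_nsmul_le_sum fun _ hk => two_le_of_mem_cycleType (σ := g) hk
  have hsum := g.sum_cycleType_le
  rw [smul_eq_mul] at hcard
  rw [Fintype.card_fin] at hsum
  rw [numCycles] at h
  omega

theorem numCycles_permCastSucc (σ : Perm (Fin (n + 1))) :
    numCycles (n + 1) (permCastSucc (n + 1) σ) = numCycles n σ + 1 := by
  have hsum := σ.sum_cycleType_le
  rw [Fintype.card_fin] at hsum
  rw [numCycles, numCycles, cycleType_permCastSucc]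
  omega

theorem numCycles_swap_castSucc_mul (i : Fin (n + 1)) (σ : Perm (Fin (n + 1))) :
    numCycles (n + 1) (swap i.castSucc (Fin.last (n + 1)) * permCastSucc (n + 1) σ) =
      numCycles n σ := by
  have := card_parts_partition_swap_mul (Fin.castSucc_lt_last i).ne (permCastSucc_apply_last σ)
  rw [← numCycles_eq_card_parts, ← numCycles_eq_card_parts, numCycles_permCastSucc] at this
  omega

end numCycles

theorem MonoidAlgebra.mapDomainRingHom_of {k G H : Type*} [Semiring k] [Monoid G] [Monoid H]
    (f : G →* H) (g : G) : mapDomainRingHom k f (of k G g) = of k H (f g) := by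
  simp [of_apply, mapDomain_single]

noncomputable def algCastSucc (m : ℕ) :
    MonoidAlgebra ℚ (Perm (Fin m)) →+* MonoidAlgebra ℚ (Perm (Fin (m + 1))) :=
  MonoidAlgebra.mapDomainRingHom ℚ (permCastSucc m)

theorem algCastSucc_injective (m : ℕ) : Function.Injective (algCastSucc m) :=
  MonoidAlgebra.mapDomain_injective (extendDomainHom_injective _)

theorem algCastSucc_of {m : ℕ} (σ : Perm (Fin m)) :
    algCastSucc m (MonoidAlgebra.of ℚ _ σ) = MonoidAlgebra.of ℚ _ (permCastSucc m σ) :=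
  MonoidAlgebra.mapDomainRingHom_of _ σ

section JM

variable (n : ℕ)

theorem JM_eq_sum_Iio (k : Fin (n + 1)) :
    JM n k = ∑ i ∈ Iio k, MonoidAlgebra.of ℚ _ (swap i k) := by
  rw [JM, filter_gt_eq_Iio]

theorem JM_castSucc (j : Fin (n + 1)) : JM (n + 1) j.castSucc = algCastSucc (n + 1) (JM n j) := by
  rw [JM_eq_sum_Iio, JM_eq_sum_Iio, Fin.Iio_castSucc, sum_map, map_sum]
  refine sum_congr rfl fun i _ => ?_
  rw [algCastSucc_of, permCastSucc_swap]
  rfl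

theorem JM_last :
    JM (n + 1) (Fin.last (n + 1)) =
      ∑ i : Fin (n + 1), MonoidAlgebra.of ℚ _ (swap i.castSucc (Fin.last (n + 1))) := by
  rw [JM_eq_sum_Iio, Fin.Iio_last_eq_map, sum_map]
  rfl

theorem pairwise_commute_JM_of_succ
    (h : Pairwise fun i j : Fin (n + 1) => Commute (JM (n + 1) i.succ) (JM (n + 1) j.succ)) :
    Pairwise fun i j : Fin n => Commute (JM n i.succ) (JM n j.succ) := fun i j hij => by
  have : Commute (JM (n + 1) i.castSucc.succ) (JM (n + 1) j.castSucc.succ) :=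
    h ((Fin.castSucc_injective n).ne hij)
  rw [Fin.succ_castSucc, Fin.succ_castSucc, JM_castSucc, JM_castSucc] at this
  exact this.of_map (algCastSucc_injective _)

theorem noncommEsymm_JM_succ (b : ℕ)
    (h : Pairwise fun i j : Fin (n + 1) => Commute (JM (n + 1) i.succ) (JM (n + 1) j.succ)) :
    noncommEsymm (fun k : Fin (n + 1) => JM (n + 1) k.succ) h (b + 1) =
      algCastSucc (n + 1) (noncommEsymm _ (pairwise_commute_JM_of_succ n h) (b + 1)) +
        JM (n + 1) (Fin.last (n + 1)) *
          algCastSucc (n + 1) (noncommEsymm _ (pairwise_commute_JM_of_succ n h) b) := by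
  rw [noncommEsymm_fin_succ, map_noncommEsymm, map_noncommEsymm, Fin.succ_last]
  have : (fun k : Fin (n + 1) => JM (n + 1) k.succ) ∘ Fin.castSucc =
      algCastSucc (n + 1) ∘ fun k : Fin n => JM n k.succ := by
    ext1 k
    exact (congrArg (JM (n + 1)) (Fin.succ_castSucc k)).trans (JM_castSucc n k.succ)
  simp only [this]

end JM

noncomputable def cycleSum (n k : ℕ) : MonoidAlgebra ℚ (Perm (Fin (n + 1))) :=
  ∑ g with numCycles n g = k, MonoidAlgebra.of ℚ _ g

theorem cycleSum_zero (n : ℕ) : cycleSum n 0 = 0 :=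
  sum_eq_zero fun g hg => absurd (mem_filter.1 hg).2 (numCycles_pos g).ne'

theorem cycleSum_add_one_self (n : ℕ) : cycleSum n (n + 1) = 1 := by
  have : ({g | numCycles n g = n + 1} : Finset (Perm (Fin (n + 1)))) = {1} := by
    ext g
    simp [numCycles_eq_add_one_iff]
  rw [cycleSum, this, sum_singleton, map_one]

theorem cycleSum_succ (n k : ℕ) :
    cycleSum (n + 1) (k + 1) =
      algCastSucc (n + 1) (cycleSum n k) +
        JM (n + 1) (Fin.last (n + 1)) * algCastSucc (n + 1) (cycleSum n (k + 1)) := by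
  simp only [cycleSum, sum_filter, map_sum, mul_sum, JM_last, sum_mul]
  rw [Fintype.sum_perm_fin_succ, sum_comm (s := univ (α := Perm (Fin (n + 1))))]
  simp only [numCycles_permCastSucc, numCycles_swap_castSucc_mul, Nat.add_right_cancel_iff,
    apply_ite (algCastSucc _), map_zero, algCastSucc_of, mul_ite, mul_zero, map_mul]

theorem noncommEsymm_JM_eq_cycleSum (n b : ℕ)
    (h : Pairwise fun i j : Fin n => Commute (JM n i.succ) (JM n j.succ)) :
    noncommEsymm (fun k : Fin n => JM n k.succ) h b = cycleSum n (n + 1 - b) := by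
  induction n generalizing b with
  | zero =>
    rcases b with _ | b
    · rw [noncommEsymm_zero, Nat.sub_zero, cycleSum_add_one_self]
    · rw [noncommEsymm_eq_zero_of_card_lt (by simp), Nat.sub_eq_zero_of_le (by omega),
        cycleSum_zero]
  | succ n ih =>
    rcases b with _ | b
    · rw [noncommEsymm_zero, Nat.sub_zero, cycleSum_add_one_self]
    rcases le_or_gt b n with hbn | hbn
    · rw [noncommEsymm_JM_succ, ih, ih, show n + 1 + 1 - (b + 1) = n - b + 1 by omega,
        cycleSum_succ, show n + 1 - (b + 1) = n - b by omega, show n + 1 - b = n - b + 1 by omega]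
    · rw [noncommEsymm_eq_zero_of_card_lt (by simpa using hbn), Nat.sub_eq_zero_of_le (by omega),
        cycleSum_zero]

theorem esymm_JM_eq_sum_perms_general (n b : ℕ)
    (hcomm : ∀ j k : Fin (n + 1), Commute (JM n j) (JM n k)) :
    ∑ s ∈ Finset.powersetCard b (Finset.univ : Finset (Fin n)),
        s.noncommProd (fun k : Fin n => JM n k.succ)
          (fun a _ c _ _ => hcomm a.succ c.succ) =
      ∑ g ∈ Finset.univ.filter (fun g : Equiv.Perm (Fin (n + 1)) =>
          numCycles n g = (n + 1) - b),
        MonoidAlgebra.of ℚ (Equiv.Perm (Fin (n + 1))) g :=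
  noncommEsymm_JM_eq_cycleSum n b fun i j _ => hcomm i.succ j.succ

/-- Jucys' correspondence: for `0 ≤ b ≤ n`, the elementary symmetric polynomial `σ_b`
in the Jucys–Murphy elements `𝒥₂,…,𝒥_{n+1}` equals the sum of all permutations of
`S_{n+1}` with exactly `n + 1 − b` cycles. -/
theorem esymm_JM_eq_sum_perms (n b : ℕ) (hb : b ≤ n)
    (hcomm : ∀ j k : Fin (n + 1), Commute (JM n j) (JM n k)) :
    ∑ s ∈ Finset.powersetCard b (Finset.univ : Finset (Fin n)),
        s.noncommProd (fun k : Fin n => JM n k.succ)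
          (fun a _ c _ _ => hcomm a.succ c.succ) =
      ∑ g ∈ Finset.univ.filter (fun g : Equiv.Perm (Fin (n + 1)) =>
          numCycles n g = (n + 1) - b),
        MonoidAlgebra.of ℚ (Equiv.Perm (Fin (n + 1))) g :=
  esymm_JM_eq_sum_perms_general n b hcomm
end

section
/- Every symmetric polynomial evaluated at the Jucys–Murphy elements 𝒥₂,…,𝒥ₙ lies in the center of the group algebra ℚ[Sₙ]. -/
/-!
Let `s = (a a+1)` be an adjacent transposition. It commutes with `𝒥_k` for `k ≠ a, a+1`, and
`s 𝒥_a + 1 = 𝒥_{a+1} s`; since `s² = 1` this forces `s` to commute with `𝒥_a + 𝒥_{a+1}` and,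
the `𝒥`'s commuting, with `𝒥_a 𝒥_{a+1}`. If `P` is symmetric in the variables `x, y`, then
`2P = P(x, y) + P(y, x)` is a combination of monomials in the other variables times sums
`x^p y^q + x^q y^p`, which are polynomials in `x + y` and `xy`. So a symmetric polynomial in the
`𝒥`'s commutes with every adjacent transposition, and these generate the symmetric group.
-/

open Finset

open MvPolynomial MonoidAlgebra Equiv
open scoped IsMulCommutative

section Polarization

variable {A : Type*} [CommRing A] {S : Type*} [SetLike S A] [SubringClass S A] {C : S} {x y : A}

theorem pow_add_pow_mem (hadd : x + y ∈ C) (hmul : x * y ∈ C) (k : ℕ) : x ^ k + y ^ k ∈ C := by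
  induction k using Nat.twoStepInduction with
  | zero => simpa using add_mem (one_mem C) (one_mem C)
  | one => simpa using hadd
  | more k hk hk1 =>
    have h : x ^ (k + 2) + y ^ (k + 2) =
        (x + y) * (x ^ (k + 1) + y ^ (k + 1)) - x * y * (x ^ k + y ^ k) := by ring
    rw [h]
    exact sub_mem (mul_mem hadd hk1) (mul_mem hmul hk)

theorem pow_mul_pow_add_pow_mul_pow_mem (hadd : x + y ∈ C) (hmul : x * y ∈ C) (p q : ℕ) :
    x ^ p * y ^ q + x ^ q * y ^ p ∈ C := by
  wlog hqp : q ≤ p generalizing p q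
  · rw [add_comm]; exact this q p (le_of_not_ge hqp)
  obtain ⟨d, rfl⟩ := Nat.exists_eq_add_of_le hqp
  have h : x ^ (q + d) * y ^ q + x ^ q * y ^ (q + d) = (x * y) ^ q * (x ^ d + y ^ d) := by ring
  rw [h]
  exact mul_mem (pow_mem hmul q) (pow_add_pow_mem hadd hmul d)

end Polarization

theorem Finsupp.prod_pow_eq_pow_mul_pow_mul_prod_erase {M σ : Type*} [CommMonoid M]
    [DecidableEq σ] (m : σ →₀ ℕ) {i j : σ} (hij : i ≠ j) (g : σ → M) :
    m.prod (fun k e => g k ^ e) =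
      g i ^ m i * (g j ^ m j * ((m.erase i).erase j).prod (fun k e => g k ^ e)) := by
  rw [← Finsupp.mul_prod_erase' m i _ (fun _ => pow_zero _),
    ← Finsupp.mul_prod_erase' (m.erase i) j _ (fun _ => pow_zero _), Finsupp.erase_ne hij.symm]

section SwapInvariant

variable {R A σ : Type*} [CommRing R] [CommRing A] [Algebra R A] [DecidableEq σ]
  (C : Subalgebra R A) {g : σ → A} {i j : σ}

theorem aeval_add_aeval_comp_swap_mem (hij : i ≠ j) (hg : ∀ k, k ≠ i → k ≠ j → g k ∈ C)
    (hadd : g i + g j ∈ C) (hmul : g i * g j ∈ C) (P : MvPolynomial σ R) :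
    aeval g P + aeval (g ∘ swap i j) P ∈ C := by
  induction P using MvPolynomial.induction_on' with
  | monomial m c =>
    set W := ((m.erase i).erase j).prod (fun k e => g k ^ e)
    have hW : W ∈ C := by
      refine prod_mem fun k hk => pow_mem (hg k ?_ ?_) _
      all_goals simp_all [Finsupp.support_erase]
    have hW_swap : ((m.erase i).erase j).prod (fun k e => (g ∘ swap i j) k ^ e) = W := by
      refine Finsupp.prod_congr fun k hk => ?_
      simp only [Finsupp.support_erase, Finset.mem_erase] at hk
      rw [Function.comp_apply, swap_apply_of_ne_of_ne hk.2.1 hk.1]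
    rw [aeval_monomial, aeval_monomial, Finsupp.prod_pow_eq_pow_mul_pow_mul_prod_erase m hij,
      Finsupp.prod_pow_eq_pow_mul_pow_mul_prod_erase m hij, hW_swap]
    simp only [Function.comp_apply, swap_apply_left, swap_apply_right]
    have h : algebraMap R A c * (g i ^ m i * (g j ^ m j * W)) +
        algebraMap R A c * (g j ^ m i * (g i ^ m j * W)) =
        algebraMap R A c * (W * (g i ^ m i * g j ^ m j + g i ^ m j * g j ^ m i)) := by ring
    rw [h]
    exact mul_mem (C.algebraMap_mem c) (mul_mem hW (pow_mul_pow_add_pow_mul_pow_mem hadd hmul _ _))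
  | add p q hp hq =>
    rw [map_add, map_add, add_add_add_comm]
    exact add_mem hp hq

theorem aeval_mem_of_rename_swap_eq [Invertible (2 : R)] (hij : i ≠ j)
    (hg : ∀ k, k ≠ i → k ≠ j → g k ∈ C) (hadd : g i + g j ∈ C) (hmul : g i * g j ∈ C)
    {P : MvPolynomial σ R} (hP : rename (swap i j) P = P) : aeval g P ∈ C := by
  have h := aeval_add_aeval_comp_swap_mem C hij hg hadd hmul P
  rw [← aeval_rename, hP, ← two_smul R] at h
  simpa [smul_smul] using C.smul_mem h (⅟2 : R)

end SwapInvariant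

section CommutingFamily

variable {R A ι : Type*} [CommRing R] [Ring A] [Algebra R A] {x : ι → A}

theorem Set.mul_comm_of_mem_range (hx : ∀ i j, Commute (x i) (x j)) :
    ∀ a ∈ Set.range x, ∀ b ∈ Set.range x, a * b = b * a := by
  rintro _ ⟨i, rfl⟩ _ ⟨j, rfl⟩
  exact (hx i j).eq

/-- `aeval` needs a commutative target, so a commuting family is evaluated in the commutative
subalgebra it generates. -/
noncomputable def aevalCommuting (hx : ∀ i j, Commute (x i) (x j)) : MvPolynomial ι R →ₐ[R] A :=
  haveI := Algebra.isMulCommutative_adjoin R (Set.mul_comm_of_mem_range hx)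
  (Algebra.adjoin R (Set.range x)).val.comp
    (aeval fun i => ⟨x i, Algebra.subset_adjoin ⟨i, rfl⟩⟩)

theorem aevalCommuting_eq_sum_noncommProd [Fintype ι] (hx : ∀ i j, Commute (x i) (x j))
    (P : MvPolynomial ι R) :
    aevalCommuting hx P = ∑ m ∈ P.support, P.coeff m •
      (univ : Finset ι).noncommProd (fun k => x k ^ m k)
        (fun a _ b _ _ => (hx a b).pow_pow _ _) := by
  have := Algebra.isMulCommutative_adjoin R (Set.mul_comm_of_mem_range hx)
  rw [aevalCommuting, AlgHom.comp_apply, aeval_def, eval₂_eq', map_sum]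
  refine Finset.sum_congr rfl fun m _ => ?_
  rw [map_mul, AlgHom.commutes, ← Algebra.smul_def, ← noncommProd_eq_prod]
  exact congrArg _ ((map_noncommProd _ _ _ _).trans (noncommProd_congr rfl (fun _ _ => rfl) _))

theorem aevalCommuting_mem_adjoin (hx : ∀ i j, Commute (x i) (x j)) (P : MvPolynomial ι R) :
    aevalCommuting hx P ∈ Algebra.adjoin R (Set.range x) :=
  SetLike.coe_mem _

theorem aevalCommuting_mem (hx : ∀ i j, Commute (x i) (x j)) {C : Subalgebra R A}
    (hC : ∀ k, x k ∈ C) (P : MvPolynomial ι R) : aevalCommuting hx P ∈ C :=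
  Algebra.adjoin_le (Set.range_subset_iff.2 hC) (aevalCommuting_mem_adjoin hx P)

theorem aevalCommuting_mem_of_rename_swap_eq [DecidableEq ι] [Invertible (2 : R)]
    (hx : ∀ i j, Commute (x i) (x j)) {C : Subalgebra R A} {i j : ι} (hij : i ≠ j)
    (hC : ∀ k, k ≠ i → k ≠ j → x k ∈ C) (hadd : x i + x j ∈ C) (hmul : x i * x j ∈ C)
    {P : MvPolynomial ι R} (hP : rename (swap i j) P = P) : aevalCommuting hx P ∈ C := by
  have := Algebra.isMulCommutative_adjoin R (Set.mul_comm_of_mem_range hx)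
  exact aeval_mem_of_rename_swap_eq (C.comap (Algebra.adjoin R (Set.range x)).val) hij hC hadd
    hmul hP

end CommutingFamily

section InvolutionRelation

variable {M : Type*} [Ring M] {s x y : M}

theorem mul_eq_mul_add_one_of_mul_add_one_eq (hs : s * s = 1) (h : s * x + 1 = y * s) :
    s * y = x * s + 1 := by
  have h' := congrArg (fun z => s * z * s) h
  simp only [mul_add, add_mul, ← mul_assoc, hs, one_mul, mul_one] at h'
  simpa only [mul_assoc, hs, mul_one] using h'.symm

theorem commute_add_of_mul_add_one_eq (hs : s * s = 1) (h : s * x + 1 = y * s) :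
    Commute s (x + y) := by
  have h' := mul_eq_mul_add_one_of_mul_add_one_eq hs h
  calc s * (x + y) = s * x + 1 + s * y - 1 := by noncomm_ring
    _ = (x + y) * s := by rw [h, h']; noncomm_ring

theorem commute_mul_of_mul_add_one_eq (hs : s * s = 1) (h : s * x + 1 = y * s)
    (hxy : Commute x y) : Commute s (x * y) := by
  have h' := mul_eq_mul_add_one_of_mul_add_one_eq hs h
  calc s * (x * y) = (s * x + 1) * y - y := by noncomm_ring
    _ = y * (s * y) - y := by rw [h, mul_assoc]
    _ = x * y * s := by rw [h', hxy.eq]; noncomm_ring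

end InvolutionRelation

section SwapConjugation

variable {k G : Type*} [CommSemiring k] [DecidableEq G]

theorem of_mul_sum_of_swap (s : Perm G) (S : Finset G) (j : G) :
    of k _ s * ∑ i ∈ S, of k _ (swap i j) = (∑ i ∈ S, of k _ (swap (s i) (s j))) * of k _ s := by
  simp only [mul_sum, sum_mul, ← map_mul, mul_swap_eq_swap_mul]

end SwapConjugation

section JucysMurphy

variable {n : ℕ}

theorem JM_zero : JM n 0 = 0 := by
  simp [JM]

theorem swap_castSucc_succ_lt_iff {a : Fin n} {j k : Fin (n + 1)} (hk : k ≠ a.succ) :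
    swap a.castSucc a.succ j < k ↔ j < k := by
  simp only [Ne, Fin.ext_iff, Fin.val_succ] at hk
  rw [swap_apply_def]
  split_ifs <;>
    simp only [Fin.lt_def, Fin.ext_iff, Fin.val_succ, Fin.val_castSucc] at * <;> omega

theorem commute_of_swap_JM (a : Fin n) {k : Fin (n + 1)} (hka : k ≠ a.castSucc)
    (hkb : k ≠ a.succ) : Commute (of ℚ _ (swap a.castSucc a.succ)) (JM n k) := by
  rw [Commute, SemiconjBy, JM, of_mul_sum_of_swap, swap_apply_of_ne_of_ne hka hkb]
  congr 1
  refine sum_equiv (swap a.castSucc a.succ) (fun j => ?_) (fun j _ => rfl)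
  simp [swap_castSucc_succ_lt_iff hkb]

theorem JM_succ (a : Fin n) :
    JM n a.succ = of ℚ _ (swap a.castSucc a.succ) +
      ∑ j ∈ univ.filter (· < a.castSucc), of ℚ _ (swap j a.succ) := by
  have h : univ.filter (· < a.succ) = insert a.castSucc (univ.filter (· < a.castSucc)) := by
    ext j
    simp only [mem_insert, mem_filter, mem_univ, true_and, Fin.lt_def, Fin.ext_iff, Fin.val_succ,
      Fin.val_castSucc]
    omega
  rw [JM, h, sum_insert (by simp)]

theorem of_swap_mul_JM_castSucc_add_one (a : Fin n) :
    of ℚ _ (swap a.castSucc a.succ) * JM n a.castSucc + 1 =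
      JM n a.succ * of ℚ _ (swap a.castSucc a.succ) := by
  rw [JM, of_mul_sum_of_swap, swap_apply_left, JM_succ, add_mul, ← map_mul, swap_mul_self, map_one,
    add_comm (1 : MonoidAlgebra ℚ _)]
  congr 2
  refine sum_congr rfl fun j hj => ?_
  have hj : j < a.castSucc := (mem_filter.1 hj).2
  rw [swap_apply_of_ne_of_ne hj.ne (hj.trans Fin.castSucc_lt_succ).ne]

end JucysMurphy

section Center

variable {k G : Type*} [CommSemiring k] [Monoid G]

theorem MonoidAlgebra.mem_center_of_forall_commute_of {z : MonoidAlgebra k G}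
    (h : ∀ g, Commute (of k G g) z) : z ∈ Subalgebra.center k (MonoidAlgebra k G) := by
  refine Subalgebra.mem_center_iff.2 fun b => ?_
  induction b using MonoidAlgebra.induction_on with
  | of g => exact (h g).eq
  | add b c hb hc => exact (Commute.add_left hb hc).eq
  | smul r b hb => exact (Commute.smul_left hb r).eq

theorem mem_center_of_forall_commute_of_swap_castSucc_succ {n : ℕ}
    {z : MonoidAlgebra k (Perm (Fin (n + 1)))}
    (h : ∀ a : Fin n, Commute (of k _ (swap a.castSucc a.succ)) z) :
    z ∈ Subalgebra.center k (MonoidAlgebra k (Perm (Fin (n + 1)))) := by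
  refine MonoidAlgebra.mem_center_of_forall_commute_of fun σ => ?_
  have hσ : σ ∈ Submonoid.closure (Set.range fun a : Fin n => swap a.castSucc a.succ) := by
    rw [Perm.mclosure_swap_castSucc_succ]; trivial
  induction hσ using Submonoid.closure_induction with
  | mem _ ha => obtain ⟨a, rfl⟩ := ha; exact h a
  | one => rw [map_one]; exact Commute.one_left z
  | mul σ τ _ _ hσ hτ => rw [map_mul]; exact hσ.mul_left hτ

end Center

theorem commute_of_swap_aevalCommuting_JM {n : ℕ}
    (hcomm : ∀ j k : Fin (n + 1), Commute (JM n j) (JM n k))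
    {P : MvPolynomial (Fin n) ℚ} (hP : P.IsSymmetric) (a : Fin n) :
    Commute (of ℚ _ (swap a.castSucc a.succ))
      (aevalCommuting (x := fun k : Fin n => JM n k.succ) (fun j k => hcomm j.succ k.succ) P) := by
  set s := of ℚ _ (swap a.castSucc a.succ)
  have hs : s * s = 1 := by rw [← map_mul, swap_mul_self, map_one]
  let C := Subalgebra.centralizer ℚ {s}
  have hC : ∀ z, z ∈ C ↔ Commute s z := by
    simp [C, Subalgebra.mem_centralizer_iff, Commute, SemiconjBy]
  suffices h : aevalCommuting _ P ∈ C from (hC _).1 h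
  obtain ⟨m, rfl⟩ : ∃ m, n = m + 1 := ⟨n - 1, by have := a.pos; omega⟩
  induction a using Fin.cases with
  | zero =>
    -- `JM _ 0 = 0`, so the relation for `s = swap 0 1` makes `s` commute with `JM _ 1` itself.
    refine aevalCommuting_mem _ (fun k => ?_) P
    induction k using Fin.cases with
    | zero =>
      have h := commute_add_of_mul_add_one_eq hs (of_swap_mul_JM_castSucc_add_one 0)
      rwa [Fin.castSucc_zero, JM_zero, zero_add, ← hC] at h
    | succ k => exact (hC _).2 (commute_of_swap_JM 0 (by simp)
      ((Fin.succ_injective _).ne (Fin.succ_ne_zero k)))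
  | succ a =>
    refine aevalCommuting_mem_of_rename_swap_eq _ Fin.castSucc_lt_succ.ne (fun k hki hkj => ?_)
      ?_ ?_ (hP (swap a.castSucc a.succ))
    · refine (hC _).2 (commute_of_swap_JM a.succ ?_ ((Fin.succ_injective _).ne hkj))
      rw [← Fin.succ_castSucc]
      exact (Fin.succ_injective _).ne hki
    · rw [Fin.succ_castSucc, hC]
      exact commute_add_of_mul_add_one_eq hs (of_swap_mul_JM_castSucc_add_one a.succ)
    · rw [Fin.succ_castSucc, hC]
      exact commute_mul_of_mul_add_one_eq hs (of_swap_mul_JM_castSucc_add_one a.succ) (hcomm _ _)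

/-- Every symmetric polynomial `P` in `n` variables, evaluated at the Jucys–Murphy elements
`𝒥₂,…,𝒥_{n+1}` of `ℚ[S_{n+1}]`, lies in the center of the group algebra. -/
theorem symmPoly_JM_mem_center (n : ℕ)
    (hcomm : ∀ j k : Fin (n + 1), Commute (JM n j) (JM n k))
    (P : MvPolynomial (Fin n) ℚ) (hP : P.IsSymmetric) :
    (∑ m ∈ P.support, P.coeff m •
        (Finset.univ : Finset (Fin n)).noncommProd (fun k : Fin n => JM n k.succ ^ m k)
          (fun a _ c _ _ => (hcomm a.succ c.succ).pow_pow _ _)) ∈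
      Subalgebra.center ℚ (MonoidAlgebra ℚ (Equiv.Perm (Fin (n + 1)))) := by
  rw [← aevalCommuting_eq_sum_noncommProd (x := fun k : Fin n => JM n k.succ)
    (fun j k => hcomm j.succ k.succ) P]
  exact mem_center_of_forall_commute_of_swap_castSucc_succ
    (commute_of_swap_aevalCommuting_JM hcomm hP)
end

section
/- The formal power series Ψ(x) = ∑_{n=0}^∞ (x^n / (n! ħ^n)) exp(ħ^r ∑_{j=1}^{n−1} j^r) satisfies the differential equation (ħ x d/dx) Ψ = x · exp((ħ x d/dx)^r) Ψ, where exp of the operator acts termwise on monomials x^n by multiplication by exp(ħ^r n^r). -/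
open Finset

/-- The coefficient `c_n = exp(hbar^r ∑_{j=1}^{n−1} j^r) / (n! hbar^n)` of the wave function
for atlantes Hurwitz numbers. -/
noncomputable def atlCoeff (r : ℕ) (hbar : ℝ) (n : ℕ) : ℝ :=
  Real.exp (hbar ^ r * ∑ j ∈ Finset.range n, (j : ℝ) ^ r) / (n.factorial * hbar ^ n)

/-- The quantum curve equation for atlantes Hurwitz numbers:
`(ħ x d/dx) Ψ = x · exp((ħ x d/dx)^r) Ψ`, where `ħ x d/dx` acts on `x^n` by `ħ n x^n`
and `exp((ħ x d/dx)^r)` acts on `x^n` by multiplication by `exp(ħ^r n^r)`. -/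
theorem atlantes_quantum_curve (r : ℕ) (hr : 1 ≤ r) (hbar : ℝ) (hpos : 0 < hbar) :
    (PowerSeries.mk fun n => hbar * n * atlCoeff r hbar n) =
      PowerSeries.X *
        PowerSeries.mk (fun n => Real.exp (hbar ^ r * (n : ℝ) ^ r) * atlCoeff r hbar n) := by
  ext n
  rcases n with _ | n
  · simp [PowerSeries.coeff_zero_eq_constantCoeff]
  · rw [PowerSeries.coeff_succ_X_mul, PowerSeries.coeff_mk, PowerSeries.coeff_mk]
    unfold atlCoeff
    have hne : hbar ≠ 0 := ne_of_gt hpos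
    have hfac : ((n + 1 : ℕ).factorial : ℝ) = (n + 1 : ℝ) * (n.factorial : ℝ) := by
      push_cast [Nat.factorial_succ]; ring
    rw [Finset.sum_range_succ, mul_add, Real.exp_add, hfac, pow_succ]
    have hfacne : (n.factorial : ℝ) ≠ 0 := Nat.cast_ne_zero.mpr n.factorial_ne_zero
    have hn1 : (n + 1 : ℝ) ≠ 0 := by positivity
    have hp : hbar ^ n ≠ 0 := pow_ne_zero _ hne
    push_cast
    field_simp
end
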